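/- For the barrier-relaxed 1D contact dynamics obtained by replacing the constraint ν := x_o⁺ − x_a⁺ − r ≥ 0 with the penalty −κ log ν (κ > 0) in the objective (1/2)k(x_a⁺ − u)² + (m/2δt²)(x_o⁺ − x_o)², the resulting smoothed next object state x_o⁺(u) is a strictly increasing, continuously differentiable function of u on all of ℝ. -/

import Mathlib

/-!
With `c = m / (2δt²)` and `ν = x_o⁺ − x_a⁺ − r`, the stationarity conditions of the barrier
objective read `k (x_a⁺ − u) = −s`, `2c (x_o⁺ − x_o) = s`, `s ν = κ` for the contact force `s`.
Eliminating the positions gives `ν = (x_o − u − r) + α s` with `α = 1/(2c) + 1/k`, so `s` is the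
positive root of `α s² + (x_o − u − r) s = κ`: an explicit, smooth and strictly increasing
function of `u`, and `x_o⁺ = x_o + s / (2c)` inherits both properties. The stationary point is the
unique minimizer because the objective is a positive definite quadratic plus the convex term
`−κ log ν`, which lies above its tangent line (`log t ≤ t − 1`).
-/

open Real

namespace OneDPusher

noncomputable def posRoot (α κ d : ℝ) : ℝ :=
  (-d + √(d ^ 2 + 4 * α * κ)) / (2 * α)

section posRoot

variable {α κ : ℝ} (hα : 0 < α) (hκ : 0 < κ)
include hα hκ

theorem posRoot_pos (d : ℝ) : 0 < posRoot α κ d := by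
  have hsq : √(d ^ 2 + 4 * α * κ) ^ 2 = d ^ 2 + 4 * α * κ := sq_sqrt (by positivity)
  have : d < √(d ^ 2 + 4 * α * κ) := by nlinarith [sqrt_nonneg (d ^ 2 + 4 * α * κ)]
  exact div_pos (by linarith) (by positivity)

theorem posRoot_quadratic (d : ℝ) : α * posRoot α κ d ^ 2 + d * posRoot α κ d = κ := by
  have hsq : √(d ^ 2 + 4 * α * κ) ^ 2 = d ^ 2 + 4 * α * κ := sq_sqrt (by positivity)
  unfold posRoot
  set S := √(d ^ 2 + 4 * α * κ)
  field_simp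
  linear_combination hsq

theorem posRoot_strictAnti : StrictAnti (posRoot α κ) := by
  intro d₁ d₂ hd
  have h₁ := posRoot_quadratic hα hκ d₁
  have h₂ := posRoot_quadratic hα hκ d₂
  have p₁ := posRoot_pos hα hκ d₁
  have p₂ := posRoot_pos hα hκ d₂
  by_contra! hle
  -- `α s₁ + d₁ = κ / s₁ > 0`, so `s ↦ α s² + d₁ s` increases on `[s₁, ∞)`
  have hslope : 0 < α * posRoot α κ d₁ + d₁ := by nlinarith
  nlinarith [mul_pos p₂ (sub_pos.2 hd),
    mul_nonneg (sub_nonneg.2 hle) (add_pos (mul_pos hα p₂) hslope).le]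

theorem contDiff_posRoot {n : WithTop ℕ∞} : ContDiff ℝ n (posRoot α κ) := by
  have hsqrt : ContDiff ℝ n fun d : ℝ => √(d ^ 2 + 4 * α * κ) :=
    ContDiff.sqrt (by fun_prop) fun d => by positivity
  exact (contDiff_neg.add hsqrt).div_const _

end posRoot

section barrier

variable {k c r κ xo u s : ℝ} {P p : ℝ × ℝ}

-- `p = (x_a⁺, x_o⁺)`
variable (k c r κ xo u) in
noncomputable def barrierObjective (p : ℝ × ℝ) : ℝ :=
  1 / 2 * k * (p.1 - u) ^ 2 + c * (p.2 - xo) ^ 2 - κ * log (p.2 - p.1 - r)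

theorem barrierObjective_add_sq_le (hκ : 0 ≤ κ)
    (hA : k * (P.1 - u) = -s) (hB : 2 * c * (P.2 - xo) = s)
    (hνP : 0 < P.2 - P.1 - r) (hν : s * (P.2 - P.1 - r) = κ) (hp : r < p.2 - p.1) :
    barrierObjective k c r κ xo u P + (1 / 2 * k * (p.1 - P.1) ^ 2 + c * (p.2 - P.2) ^ 2) ≤
      barrierObjective k c r κ xo u p := by
  have hνp : 0 < p.2 - p.1 - r := by linarith
  have hlog : κ * log (p.2 - p.1 - r) - κ * log (P.2 - P.1 - r) ≤
      s * ((p.2 - p.1) - (P.2 - P.1)) :=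
    calc κ * log (p.2 - p.1 - r) - κ * log (P.2 - P.1 - r)
        = κ * log ((p.2 - p.1 - r) / (P.2 - P.1 - r)) := by
          rw [log_div hνp.ne' hνP.ne']; ring
      _ ≤ κ * ((p.2 - p.1 - r) / (P.2 - P.1 - r) - 1) :=
          mul_le_mul_of_nonneg_left (log_le_sub_one_of_pos (div_pos hνp hνP)) hκ
      _ = s * ((p.2 - p.1) - (P.2 - P.1)) := by rw [← hν]; field_simp; ring
  unfold barrierObjective
  linear_combination hlog - (p.1 - P.1) * hA - (p.2 - P.2) * hB

theorem barrierObjective_isUniqueMin (hk : 0 < k) (hc : 0 < c) (hκ : 0 ≤ κ)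
    (hA : k * (P.1 - u) = -s) (hB : 2 * c * (P.2 - xo) = s)
    (hνP : 0 < P.2 - P.1 - r) (hν : s * (P.2 - P.1 - r) = κ) :
    (∀ p : ℝ × ℝ, r < p.2 - p.1 →
      barrierObjective k c r κ xo u P ≤ barrierObjective k c r κ xo u p) ∧
    (∀ p : ℝ × ℝ, r < p.2 - p.1 →
      barrierObjective k c r κ xo u p ≤ barrierObjective k c r κ xo u P → p = P) := by
  refine forall₂_and.1 fun p hp => ?_
  have hexcess := barrierObjective_add_sq_le hκ hA hB hνP hν hp
  have hsq₁ : 0 ≤ 1 / 2 * k * (p.1 - P.1) ^ 2 := by positivity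
  have hsq₂ : 0 ≤ c * (p.2 - P.2) ^ 2 := by positivity
  refine ⟨by linarith, fun hle => ?_⟩
  obtain ⟨h₁, h₂⟩ := (add_eq_zero_iff_of_nonneg hsq₁ hsq₂).1 (by linarith)
  simp only [mul_eq_zero, hk.ne', hc.ne', one_div, inv_eq_zero, OfNat.ofNat_ne_zero, false_or,
    pow_eq_zero_iff two_ne_zero, sub_eq_zero] at h₁ h₂
  exact Prod.ext h₁ h₂

end barrier

section step

variable (k c r κ xo : ℝ)

noncomputable def contactForce (u : ℝ) : ℝ :=
  posRoot (1 / (2 * c) + 1 / k) κ (xo - u - r)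

noncomputable def smoothedStep (u : ℝ) : ℝ × ℝ :=
  (u - contactForce k c r κ xo u / k, xo + contactForce k c r κ xo u / (2 * c))

variable {k c κ} (hk : 0 < k) (hc : 0 < c) (hκ : 0 < κ)
include hk hc hκ

theorem smoothedStep_isUniqueMin (u : ℝ) :
    r < (smoothedStep k c r κ xo u).2 - (smoothedStep k c r κ xo u).1 ∧
    (∀ p : ℝ × ℝ, r < p.2 - p.1 →
      barrierObjective k c r κ xo u (smoothedStep k c r κ xo u) ≤
        barrierObjective k c r κ xo u p) ∧
    (∀ p : ℝ × ℝ, r < p.2 - p.1 →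
      barrierObjective k c r κ xo u p ≤
        barrierObjective k c r κ xo u (smoothedStep k c r κ xo u) →
      p = smoothedStep k c r κ xo u) := by
  have hα : 0 < 1 / (2 * c) + 1 / k := by positivity
  set s := contactForce k c r κ xo u
  have hs : 0 < s := posRoot_pos hα hκ _
  have hquad : (1 / (2 * c) + 1 / k) * s ^ 2 + (xo - u - r) * s = κ := posRoot_quadratic hα hκ _
  have hgap : (smoothedStep k c r κ xo u).2 - (smoothedStep k c r κ xo u).1 - r =
      (xo - u - r) + (1 / (2 * c) + 1 / k) * s := by
    simp only [smoothedStep]; field_simp; ring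
  have hν : s * ((smoothedStep k c r κ xo u).2 - (smoothedStep k c r κ xo u).1 - r) = κ := by
    rw [hgap]; linear_combination hquad
  have hνP : 0 < (smoothedStep k c r κ xo u).2 - (smoothedStep k c r κ xo u).1 - r :=
    pos_of_mul_pos_right (hν.symm ▸ hκ) hs.le
  have hA : k * ((smoothedStep k c r κ xo u).1 - u) = -s := by
    simp only [smoothedStep]; field_simp; ring
  have hB : 2 * c * ((smoothedStep k c r κ xo u).2 - xo) = s := by
    simp only [smoothedStep]; field_simp; ring
  exact ⟨by linarith, barrierObjective_isUniqueMin hk hc hκ.le hA hB hνP hν⟩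

theorem strictMono_smoothedStep_snd : StrictMono fun u => (smoothedStep k c r κ xo u).2 := by
  have hα : 0 < 1 / (2 * c) + 1 / k := by positivity
  have hshift : StrictAnti fun u : ℝ => xo - u - r := fun _ _ h => by linarith
  exact (((posRoot_strictAnti hα hκ).comp hshift).div_const (by positivity)).const_add xo

theorem contDiff_smoothedStep_snd {n : WithTop ℕ∞} :
    ContDiff ℝ n fun u => (smoothedStep k c r κ xo u).2 := by
  have hα : 0 < 1 / (2 * c) + 1 / k := by positivity
  have hshift : ContDiff ℝ n fun u : ℝ => xo - u - r := by fun_prop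
  exact contDiff_const.add (((contDiff_posRoot hα hκ).comp hshift).div_const _)

end step

end OneDPusher

theorem one_d_pusher_smoothed_dynamics_general (k m δt r κ xo : ℝ)
    (hk : 0 < k) (hm : 0 < m) (hδt : 0 < δt) (hκ : 0 < κ) :
    ∃ g : ℝ → ℝ × ℝ,
      (∀ u : ℝ,
        r < (g u).2 - (g u).1 ∧
        (∀ p : ℝ × ℝ, r < p.2 - p.1 →
          (1 / 2) * k * ((g u).1 - u) ^ 2 + (m / (2 * δt ^ 2)) * ((g u).2 - xo) ^ 2
            - κ * Real.log ((g u).2 - (g u).1 - r) ≤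
          (1 / 2) * k * (p.1 - u) ^ 2 + (m / (2 * δt ^ 2)) * (p.2 - xo) ^ 2
            - κ * Real.log (p.2 - p.1 - r)) ∧
        (∀ p : ℝ × ℝ, r < p.2 - p.1 →
          (1 / 2) * k * (p.1 - u) ^ 2 + (m / (2 * δt ^ 2)) * (p.2 - xo) ^ 2
            - κ * Real.log (p.2 - p.1 - r) ≤
          (1 / 2) * k * ((g u).1 - u) ^ 2 + (m / (2 * δt ^ 2)) * ((g u).2 - xo) ^ 2
            - κ * Real.log ((g u).2 - (g u).1 - r) →
          p = g u)) ∧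
      StrictMono (fun u => (g u).2) ∧
      ContDiff ℝ 1 (fun u => (g u).2) := by
  have hc : 0 < m / (2 * δt ^ 2) := by positivity
  exact ⟨OneDPusher.smoothedStep k _ r κ xo,
    OneDPusher.smoothedStep_isUniqueMin r xo hk hc hκ,
    OneDPusher.strictMono_smoothedStep_snd r xo hk hc hκ,
    OneDPusher.contDiff_smoothedStep_snd r xo hk hc hκ⟩

/-- Barrier-relaxed 1D contact dynamics: replacing the constraint
`ν := x_o⁺ − x_a⁺ − r ≥ 0` with the penalty `−κ log ν` in the objective
`(1/2)k(x_a⁺ − u)² + (m/(2δt²))(x_o⁺ − x_o)²` yields a smoothed next object state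
`u ↦ x_o⁺(u)` that is a strictly increasing, continuously differentiable
function of `u` on all of ℝ. -/
theorem one_d_pusher_smoothed_dynamics (k m δt r κ xo : ℝ)
    (hk : 0 < k) (hm : 0 < m) (hδt : 0 < δt) (hr : 0 < r) (hκ : 0 < κ) :
    ∃ g : ℝ → ℝ × ℝ,
      (∀ u : ℝ,
        r < (g u).2 - (g u).1 ∧
        (∀ p : ℝ × ℝ, r < p.2 - p.1 →
          (1 / 2) * k * ((g u).1 - u) ^ 2 + (m / (2 * δt ^ 2)) * ((g u).2 - xo) ^ 2
            - κ * Real.log ((g u).2 - (g u).1 - r) ≤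
          (1 / 2) * k * (p.1 - u) ^ 2 + (m / (2 * δt ^ 2)) * (p.2 - xo) ^ 2
            - κ * Real.log (p.2 - p.1 - r)) ∧
        (∀ p : ℝ × ℝ, r < p.2 - p.1 →
          (1 / 2) * k * (p.1 - u) ^ 2 + (m / (2 * δt ^ 2)) * (p.2 - xo) ^ 2
            - κ * Real.log (p.2 - p.1 - r) ≤
          (1 / 2) * k * ((g u).1 - u) ^ 2 + (m / (2 * δt ^ 2)) * ((g u).2 - xo) ^ 2
            - κ * Real.log ((g u).2 - (g u).1 - r) →
          p = g u)) ∧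
      StrictMono (fun u => (g u).2) ∧
      ContDiff ℝ 1 (fun u => (g u).2) :=
  one_d_pusher_smoothed_dynamics_general k m δt r κ xo hk hm hδt hκ
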